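/- Fix p₀ ∈ {1, −1, 2, −2} and α = 2/p₀. Let p₁, g : ℂ → ℂ be functions, set d = α·p₁, and let 𝓛ₙ be the associated generalized Fibonacci polynomials of Lucas type over ℂ. If r, s ∈ ℂ satisfy s ≠ 0 and s² = g(r), then for every integer n ≥ 0, 𝓛ₙ(r) = s^{n} · Lₙ(d(r)/s) / α, where Lₙ is the classical Lucas polynomial. -/

import Mathlib

/-- Generalized Fibonacci polynomials of Lucas type over `ℂ`:
`𝓛₀ = p₀`, `𝓛₁ = p₁`, `𝓛ₙ = d·𝓛ₙ₋₁ + g·𝓛ₙ₋₂` where `d = (2/p₀)·p₁`. -/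
noncomputable def GFPLC (p0 : ℂ) (p1 g : ℂ → ℂ) : ℕ → ℂ → ℂ
  | 0 => fun _ => p0
  | 1 => fun x => p1 x
  | n + 2 => fun x =>
      (2 / p0) * p1 x * GFPLC p0 p1 g (n + 1) x + g x * GFPLC p0 p1 g n x

/-- The classical Lucas polynomials viewed as functions `ℂ → ℂ`:
`L₀ = 2`, `L₁(x) = x`, `Lₙ(x) = x·Lₙ₋₁(x) + Lₙ₋₂(x)`. -/
noncomputable def lucasPoly : ℕ → ℂ → ℂ
  | 0 => fun _ => 2
  | 1 => fun x => x
  | n + 2 => fun x => x * lucasPoly (n + 1) x + lucasPoly n x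

theorem gfplc_eq_lucasPoly (p0 : ℂ)
    (hp0 : p0 = 1 ∨ p0 = -1 ∨ p0 = 2 ∨ p0 = -2)
    (p1 g : ℂ → ℂ) (r s : ℂ) (hs : s ≠ 0) (hsg : s ^ 2 = g r) (n : ℕ) :
    GFPLC p0 p1 g n r = s ^ n * lucasPoly n ((2 / p0) * p1 r / s) / (2 / p0) := by
  have hp0' : p0 ≠ 0 := by rcases hp0 with h|h|h|h <;> simp [h]
  have hα : (2 / p0) ≠ 0 := by
    simp [hp0']
  induction n using Nat.twoStepInduction with
  | zero => simp [GFPLC, lucasPoly]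
  | one => simp [GFPLC, lucasPoly]; field_simp
  | more n ih1 ih2 =>
    simp only [GFPLC, lucasPoly, ih1, ih2, ← hsg]
    field_simp
    ring
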